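/- Let C be a linear [n,k] code over F_q with availability t (each coordinate covered by t orthogonal dual parities of weight ≤ r+1), with r ≥ 2 and t ≥ 2. Then d_min(C) ≤ d_max(n − ir − 1, k − (i(r−1)+1), r, t) for every positive integer i with i(r−1)+1 < k, where d_max(n',k',r,t) is the maximum minimum distance of an availability-t, locality-r code with length n' and dimension k' over F_q. -/

import Mathlib

open Finset

/-- The Hamming weight of a vector. -/
def wt {F : Type} [Zero F] [DecidableEq F] {ι : Type} [Fintype ι] (v : ι → F) : ℕ :=
  (univ.filter (fun j => v j ≠ 0)).card

/-- The standard dot product with `c`, as a linear map. -/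
noncomputable def dotL {F : Type} [Field F] {ι : Type} [Fintype ι] (c : ι → F) :
    (ι → F) →ₗ[F] F :=
  ∑ j, c j • (LinearMap.proj j : (ι → F) →ₗ[F] F)

/-- The dual code of a linear code `C`: all vectors orthogonal (for the standard dot
product) to every codeword of `C`. -/
noncomputable def dualCode {F : Type} [Field F] {ι : Type} [Fintype ι]
    (C : Submodule F (ι → F)) : Submodule F (ι → F) :=
  ⨅ c ∈ C, LinearMap.ker (dotL c)

/-- `C` has locality `r` and availability `t`: for each coordinate `j` there are `t`
dual codewords of weight at most `r+1`, each containing `j` in its support, whose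
supports pairwise intersect exactly in `{j}`. -/
def HasAvailability {F : Type} [Field F] [DecidableEq F] {ι : Type} [Fintype ι]
    (C : Submodule F (ι → F)) (r t : ℕ) : Prop :=
  ∀ j : ι, ∃ h : Fin t → (ι → F),
    (∀ a, h a ∈ dualCode C) ∧ (∀ a, wt (h a) ≤ r + 1) ∧ (∀ a, h a j ≠ 0) ∧
    (∀ a b, a ≠ b → {l | h a l ≠ 0} ∩ {l | h b l ≠ 0} = {j})

/-- The minimum distance (minimum weight of a nonzero codeword) of a linear code. -/
noncomputable def dmin {F : Type} [Field F] [DecidableEq F] {ι : Type} [Fintype ι]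
    (C : Submodule F (ι → F)) : ℕ :=
  sInf {w | ∃ c ∈ C, c ≠ 0 ∧ wt c = w}

/-- The `i`-th generalized Hamming weight of a code `C`: the minimum support size of an
`i`-dimensional subspace of `C`. -/
noncomputable def ghw {F : Type} [Field F] {ι : Type} [Fintype ι]
    (C : Submodule F (ι → F)) (i : ℕ) : ℕ :=
  sInf {w | ∃ D : Submodule F (ι → F), D ≤ C ∧ Module.finrank F D = i ∧
    Nat.card {j : ι | ∃ v ∈ D, v j ≠ 0} = w}

/-- `d_max(n,k,r,t)` over `F`: the maximum possible minimum distance of a linear code of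
length `n` and dimension `k` over `F` with locality `r` and availability `t`. -/
noncomputable def dmax (F : Type) [Field F] [DecidableEq F] (n k r t : ℕ) : ℕ :=
  sSup {d | ∃ C : Submodule F (Fin n → F),
    Module.finrank F C = k ∧ HasAvailability C r t ∧ dmin C = d}

/-!
With availability `t ≥ 2` the dual code contains an `i`-dimensional subspace supported on at most
`i r + 1` coordinates. It is built greedily from local parities (dual codewords of weight at most
`r + 1`): a parity meeting the current support `S` adds at most `r` coordinates. When every parity
through `S` already lies in the span, the last parity added brought at most one new coordinate,
since each new coordinate `x` has two parities in the span that meet only in `x` and both must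
contain every new coordinate; so `|S| ≤ m r`, and a parity disjoint from `S` can be afforded.
Shortening `C` on a set `T` of size `i r + 1` containing this support loses at most
`|T| - i = i (r - 1) + 1` dimensions, keeps availability (restrict the parities to the complement
of `T`) and does not decrease the minimum distance.
-/

open Module

namespace LinearCode

lemma exists_le_finrank_eq {K V : Type} [Field K] [AddCommGroup V] [Module K V]
    {W : Submodule K V} [FiniteDimensional K W] {k : ℕ} (hk : k ≤ finrank K W) :
    ∃ W' ≤ W, finrank K W' = k := by
  obtain ⟨b, hb⟩ := exists_linearIndependent_of_le_finrank hk
  refine ⟨(Submodule.span K (Set.range b)).map W.subtype, Submodule.map_subtype_le _ _, ?_⟩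
  rw [Submodule.finrank_map_subtype_eq, finrank_span_eq_card hb, Fintype.card_fin]

section Duality

variable {F : Type} [Field F] {ι : Type}

def vanishingOn (T : Set ι) : Submodule F (ι → F) :=
  LinearMap.ker (LinearMap.funLeft F F ((↑) : T → ι))

lemma mem_vanishingOn {T : Set ι} {v : ι → F} : v ∈ vanishingOn T ↔ ∀ j ∈ T, v j = 0 := by
  simp [vanishingOn, funext_iff, LinearMap.funLeft_apply]

lemma vanishingOn_anti {T T' : Set ι} (h : T ⊆ T') :
    (vanishingOn T' : Submodule F (ι → F)) ≤ vanishingOn T := fun _ hv =>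
  mem_vanishingOn.2 fun j hj => mem_vanishingOn.1 hv j (h hj)

variable [Fintype ι]

lemma card_le_finrank_vanishingOn_add_card (T : Finset ι) :
    Fintype.card ι ≤ finrank F (vanishingOn (T : Set ι) : Submodule F (ι → F)) + T.card := by
  set ρ := LinearMap.funLeft F F ((↑) : ↥(T : Set ι) → ι)
  have h := LinearMap.finrank_range_add_finrank_ker ρ
  have hrange := Submodule.finrank_le (LinearMap.range ρ)
  simp only [finrank_fintype_fun_eq_card, Finset.coe_sort_coe, Fintype.card_coe] at h hrange
  change _ ≤ finrank F (LinearMap.ker ρ) + _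
  omega

lemma mem_dualCode {C : Submodule F (ι → F)} {v : ι → F} :
    v ∈ dualCode C ↔ ∀ c ∈ C, c ⬝ᵥ v = 0 := by
  simp [dualCode, dotL, dotProduct]

lemma dualCode_eq_orthogonal (C : Submodule F (ι → F)) :
    dualCode C = LinearMap.BilinForm.orthogonal (dotProductBilin F F) C := by
  ext v
  simp [mem_dualCode, LinearMap.BilinForm.mem_orthogonal_iff]

lemma finrank_add_finrank_dualCode (C : Submodule F (ι → F)) :
    finrank F C + finrank F (dualCode C) = Fintype.card ι := by
  classical
  have hB : (dotProductBilin F F : LinearMap.BilinForm F (ι → F)).Nondegenerate :=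
    ⟨fun v hv => funext fun j => by simpa using hv (Pi.single j 1),
      fun v hv => funext fun j => by simpa using hv (Pi.single j 1)⟩
  rw [dualCode_eq_orthogonal, LinearMap.BilinForm.finrank_orthogonal hB,
    finrank_fintype_fun_eq_card]
  have := Submodule.finrank_le C
  simp only [finrank_fintype_fun_eq_card] at this
  omega

lemma dualCode_anti {C C' : Submodule F (ι → F)} (h : C ≤ C') : dualCode C' ≤ dualCode C :=
  fun _ hv => mem_dualCode.2 fun c hc => mem_dualCode.1 hv c (h hc)

lemma mem_dualCode_sup {C C' : Submodule F (ι → F)} {v : ι → F}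
    (h : v ∈ dualCode C) (h' : v ∈ dualCode C') : v ∈ dualCode (C ⊔ C') := by
  rw [mem_dualCode] at *
  intro c hc
  obtain ⟨a, ha, b, hb, rfl⟩ := Submodule.mem_sup.1 hc
  rw [add_dotProduct, h a ha, h' b hb, add_zero]

lemma vanishingOn_compl_le_dualCode (T : Set ι) :
    vanishingOn Tᶜ ≤ dualCode (vanishingOn T : Submodule F (ι → F)) := by
  intro v hv
  refine mem_dualCode.2 fun c hc => Finset.sum_eq_zero fun j _ => ?_
  by_cases hj : j ∈ T
  · rw [mem_vanishingOn.1 hc j hj, zero_mul]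
  · rw [mem_vanishingOn.1 hv j hj, mul_zero]

theorem finrank_add_finrank_le_finrank_inf_vanishingOn {C D : Submodule F (ι → F)} {T : Finset ι}
    (hD : D ≤ dualCode C) (hDT : D ≤ vanishingOn (↑T)ᶜ) :
    finrank F C + finrank F D ≤ finrank F (C ⊓ vanishingOn ↑T : Submodule F (ι → F)) + T.card := by
  have hsup := Submodule.finrank_sup_add_finrank_inf_eq C (vanishingOn (T : Set ι))
  have hV := card_le_finrank_vanishingOn_add_card (F := F) T
  have hdual := finrank_add_finrank_dualCode (C ⊔ vanishingOn (T : Set ι))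
  have hDle : finrank F D ≤ finrank F (dualCode (C ⊔ vanishingOn (T : Set ι))) :=
    Submodule.finrank_mono fun v hv =>
      mem_dualCode_sup (hD hv) (vanishingOn_compl_le_dualCode _ (hDT hv))
  omega

end Duality

section Availability

variable {F : Type} [Field F] [DecidableEq F] {ι : Type} [Fintype ι]

def supp (v : ι → F) : Finset ι := univ.filter fun j => v j ≠ 0

@[simp] lemma mem_supp {v : ι → F} {j : ι} : j ∈ supp v ↔ v j ≠ 0 := by
  simp [supp]

lemma wt_eq_card_supp (v : ι → F) : wt v = (supp v).card := rfl

lemma mem_vanishingOn_compl_supp (v : ι → F) : v ∈ vanishingOn (↑(supp v))ᶜ :=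
  mem_vanishingOn.2 fun j hj => by simpa using hj

lemma _root_.HasAvailability.mono {C C' : Submodule F (ι → F)} {r t : ℕ}
    (hav : HasAvailability C r t) (h : C' ≤ C) : HasAvailability C' r t := fun j => by
  obtain ⟨p, hdual, hrest⟩ := hav j
  exact ⟨p, fun a => dualCode_anti h (hdual a), hrest⟩

def ContainsLocalParities (C : Submodule F (ι → F)) (r : ℕ) (D : Submodule F (ι → F))
    (S : Finset ι) : Prop :=
  ∀ x ∈ S, ∀ h ∈ dualCode C, wt h ≤ r + 1 → h x ≠ 0 → h ∈ D

/-- The state of the greedy construction after `m` steps. The sharper bound once `D` contains all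
local parities through `S` pays for the next step, which must then add a parity disjoint from `S`,
at cost `r + 1`. -/
structure IsLocalCover (C : Submodule F (ι → F)) (r m : ℕ) (D : Submodule F (ι → F))
    (S : Finset ι) : Prop where
  le_dualCode : D ≤ dualCode C
  le_vanishingOn : D ≤ vanishingOn (↑S)ᶜ
  finrank_eq : finrank F D = m
  card_le : S.card ≤ m * r + 1
  card_le_of_closed : ContainsLocalParities C r D S → S.card ≤ m * r

variable {C : Submodule F (ι → F)} {r t m : ℕ} {D : Submodule F (ι → F)} {S : Finset ι}

lemma isLocalCover_zero : IsLocalCover C r 0 ⊥ ∅ where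
  le_dualCode := bot_le
  le_vanishingOn := bot_le
  finrank_eq := finrank_bot F _
  card_le := by simp
  card_le_of_closed _ := by simp

variable [DecidableEq ι]

lemma _root_.HasAvailability.exists_pair {C : Submodule F (ι → F)} {r t : ℕ}
    (hav : HasAvailability C r t) (ht : 2 ≤ t) (j : ι) :
    ∃ p q : ι → F, p ∈ dualCode C ∧ q ∈ dualCode C ∧ wt p ≤ r + 1 ∧ wt q ≤ r + 1 ∧
      p j ≠ 0 ∧ q j ≠ 0 ∧ supp p ∩ supp q = {j} := by
  obtain ⟨h, hdual, hwt, hj, hinter⟩ := hav j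
  let a : Fin t := ⟨0, by omega⟩
  let b : Fin t := ⟨1, by omega⟩
  refine ⟨h a, h b, hdual a, hdual b, hwt a, hwt b, hj a, hj b, ?_⟩
  have := hinter a b (by simp [a, b, Fin.ext_iff])
  ext l
  simpa using Set.ext_iff.1 this l

lemma sdiff_subset_supp_of_mem_sup_span {D : Submodule F (ι → F)} {S : Finset ι}
    {g w : ι → F} {x : ι} (hD : D ≤ vanishingOn (↑S)ᶜ) (hw : w ∈ D ⊔ Submodule.span F {g})
    (hx : x ∈ supp g \ S) (hwx : w x ≠ 0) : supp g \ S ⊆ supp w := by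
  obtain ⟨d, hd, _, hg, rfl⟩ := Submodule.mem_sup.1 hw
  obtain ⟨a, rfl⟩ := Submodule.mem_span_singleton.1 hg
  have hd0 : ∀ y ∈ supp g \ S, d y = 0 := fun y hy =>
    mem_vanishingOn.1 (hD hd) y (by simpa using (Finset.mem_sdiff.1 hy).2)
  have ha : a ≠ 0 := by
    rintro rfl
    simp [hd0 x hx] at hwx
  intro y hy
  simpa [hd0 y hy, ha] using (Finset.mem_sdiff.1 hy).1

lemma IsLocalCover.extend (hcover : IsLocalCover C r m D S) (hr : 2 ≤ r) (ht : 2 ≤ t)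
    (hav : HasAvailability C r t) {g : ι → F} (hg : g ∈ dualCode C) (hgD : g ∉ D)
    (hcard : (S ∪ supp g).card ≤ (m + 1) * r + 1) :
    IsLocalCover C r (m + 1) (D ⊔ Submodule.span F {g}) (S ∪ supp g) where
  le_dualCode := sup_le hcover.le_dualCode ((Submodule.span_singleton_le_iff_mem _ _).2 hg)
  le_vanishingOn := sup_le
    (hcover.le_vanishingOn.trans (vanishingOn_anti (by simp)))
    ((Submodule.span_singleton_le_iff_mem _ _).2
      (vanishingOn_anti (by simp) (mem_vanishingOn_compl_supp g)))
  finrank_eq := by rw [Submodule.finrank_sup_span_singleton hgD, hcover.finrank_eq]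
  card_le := hcard
  card_le_of_closed hclosed := by
    have hnew : (supp g \ S).card ≤ 1 := by
      refine Finset.card_le_one.2 fun x hx y hy => ?_
      obtain ⟨p, q, hp, hq, hpw, hqw, hpx, hqx, hpq⟩ := hav.exists_pair ht x
      have hxS : x ∈ S ∪ supp g := Finset.mem_union_right _ (Finset.mem_sdiff.1 hx).1
      have hsub : ∀ w ∈ D ⊔ Submodule.span F {g}, w x ≠ 0 → supp g \ S ⊆ supp w :=
        fun w hw hwx => sdiff_subset_supp_of_mem_sup_span hcover.le_vanishingOn hw hx hwx
      have : y ∈ supp p ∩ supp q := Finset.mem_inter.2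
        ⟨hsub p (hclosed x hxS p hp hpw hpx) hpx hy, hsub q (hclosed x hxS q hq hqw hqx) hqx hy⟩
      rw [hpq] at this
      exact (Finset.mem_singleton.1 this).symm
    have hunion := Finset.card_sdiff_add_card (supp g) S
    rw [Finset.union_comm] at hunion
    have := hcover.card_le
    have : (m + 1) * r = m * r + r := by ring
    omega

lemma IsLocalCover.exists_succ (hcover : IsLocalCover C r m D S) (hr : 2 ≤ r) (ht : 2 ≤ t)
    (hav : HasAvailability C r t) (hm : m * (r - 1) < finrank F C) :
    ∃ D' S', IsLocalCover C r (m + 1) D' S' := by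
  have hsucc : (m + 1) * r = m * r + r := by ring
  by_cases hclosed : ContainsLocalParities C r D S
  · have hS := hcover.card_le_of_closed hclosed
    -- `S = univ` would force `dim C ≤ n - m ≤ m (r - 1)`
    obtain ⟨x, hx⟩ : ∃ x, x ∉ S := by
      by_contra! hall
      have hdual := finrank_add_finrank_dualCode C
      have hD := Submodule.finrank_mono hcover.le_dualCode
      have hcard : S.card = Fintype.card ι := by
        rw [Finset.eq_univ_of_forall hall, Finset.card_univ]
      have : m * (r - 1) + m = m * r := by rw [← Nat.mul_add_one, Nat.sub_add_cancel (by omega)]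
      rw [hcover.finrank_eq] at hD
      omega
    obtain ⟨p, -, hp, -, hpw, -, hpx, -, -⟩ := hav.exists_pair ht x
    have hpD : p ∉ D := fun hpD => hpx (mem_vanishingOn.1 (hcover.le_vanishingOn hpD) x hx)
    refine ⟨_, _, hcover.extend hr ht hav hp hpD ?_⟩
    have := Finset.card_union_le S (supp p)
    rw [← wt_eq_card_supp] at this
    omega
  · simp only [ContainsLocalParities, not_forall, exists_prop] at hclosed
    obtain ⟨x, hxS, h, hh, hhw, hhx, hhD⟩ := hclosed
    refine ⟨_, _, hcover.extend hr ht hav hh hhD ?_⟩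
    have hunion := Finset.card_sdiff_add_card (supp h) S
    rw [Finset.union_comm] at hunion
    have hsdiff : (supp h \ S).card < wt h := Finset.card_lt_card <|
      (Finset.ssubset_iff_of_subset Finset.sdiff_subset).2
        ⟨x, mem_supp.2 hhx, fun hx => (Finset.mem_sdiff.1 hx).2 hxS⟩
    have := hcover.card_le
    omega

theorem exists_isLocalCover (hr : 2 ≤ r) (ht : 2 ≤ t) (hav : HasAvailability C r t) :
    ∀ m, m * (r - 1) < finrank F C → ∃ D S, IsLocalCover C r m D S
  | 0, _ => ⟨⊥, ∅, isLocalCover_zero⟩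
  | m + 1, hm => by
    have hm' : m * (r - 1) < finrank F C :=
      lt_of_le_of_lt (Nat.mul_le_mul_right _ m.le_succ) hm
    obtain ⟨D, S, hcover⟩ := exists_isLocalCover hr ht hav m hm'
    exact hcover.exists_succ hr ht hav hm'

end Availability

section Shortening

variable {F : Type} [Field F] {ι κ : Type}

def shortening (C : Submodule F (ι → F)) (f : κ → ι) : Submodule F (κ → F) :=
  (C ⊓ vanishingOn (Set.range f)ᶜ).map (LinearMap.funLeft F F f)

variable {C : Submodule F (ι → F)} {f : κ → ι}

lemma eq_of_comp_eq {v w : ι → F} (hv : v ∈ vanishingOn (Set.range f)ᶜ)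
    (hw : w ∈ vanishingOn (Set.range f)ᶜ) (h : v ∘ f = w ∘ f) : v = w := by
  funext j
  by_cases hj : j ∈ Set.range f
  · obtain ⟨l, rfl⟩ := hj
    exact congrFun h l
  · rw [mem_vanishingOn.1 hv j hj, mem_vanishingOn.1 hw j hj]

lemma finrank_shortening :
    finrank F (shortening C f) = finrank F (C ⊓ vanishingOn (Set.range f)ᶜ : Submodule F _) := by
  set W : Submodule F (ι → F) := C ⊓ vanishingOn (Set.range f)ᶜ
  have hrange : LinearMap.range ((LinearMap.funLeft F F f).comp W.subtype) = shortening C f := by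
    rw [LinearMap.range_comp, Submodule.range_subtype, shortening]
  rw [← hrange]
  refine LinearMap.finrank_range_of_inj fun v w h => Subtype.ext ?_
  exact eq_of_comp_eq (Submodule.mem_inf.1 v.2).2 (Submodule.mem_inf.1 w.2).2 h

variable [DecidableEq F] [Fintype ι] [Fintype κ]

lemma wt_comp_le (hf : Function.Injective f) (v : ι → F) : wt (v ∘ f) ≤ wt v := by
  rw [wt_eq_card_supp, wt_eq_card_supp, ← Finset.card_map ⟨f, hf⟩]
  refine Finset.card_le_card fun j hj => ?_
  obtain ⟨l, hl, rfl⟩ := Finset.mem_map.1 hj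
  simpa using hl

lemma wt_comp_eq (hf : Function.Injective f) {v : ι → F} (hv : v ∈ vanishingOn (Set.range f)ᶜ) :
    wt (v ∘ f) = wt v := by
  refine (wt_comp_le hf v).antisymm ?_
  rw [wt_eq_card_supp, wt_eq_card_supp, ← Finset.card_map ⟨f, hf⟩]
  refine Finset.card_le_card fun j hj => ?_
  obtain ⟨l, rfl⟩ : j ∈ Set.range f := by
    by_contra h
    exact mem_supp.1 hj (mem_vanishingOn.1 hv j h)
  exact Finset.mem_map_of_mem _ (by simpa using hj)

lemma _root_.HasAvailability.shortening {r t : ℕ} (hav : HasAvailability C r t)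
    (hf : Function.Injective f) : HasAvailability (shortening C f) r t := by
  intro l
  obtain ⟨h, hdual, hwt, hl, hinter⟩ := hav (f l)
  refine ⟨fun a => h a ∘ f, fun a => ?_, fun a => (wt_comp_le hf _).trans (hwt a), hl, ?_⟩
  · refine mem_dualCode.2 fun c' hc' => ?_
    obtain ⟨c, hc, rfl⟩ := Submodule.mem_map.1 hc'
    rw [← mem_dualCode.1 (hdual a) c (Submodule.mem_inf.1 hc).1]
    refine Fintype.sum_of_injective f hf _ _ (fun j hj => ?_) fun _ => rfl
    rw [mem_vanishingOn.1 (Submodule.mem_inf.1 hc).2 j hj, zero_mul]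
  · intro a b hab
    ext k
    have := Set.ext_iff.1 (hinter a b hab) (f k)
    simp only [Set.mem_inter_iff, Set.mem_ofPred_eq, Set.mem_singleton_iff, hf.eq_iff] at this
    simpa using this

lemma exists_wt_eq_of_mem_shortening {c' : κ → F} (hc' : c' ∈ shortening C f) (hc'0 : c' ≠ 0)
    (hf : Function.Injective f) : ∃ c ∈ C, c ≠ 0 ∧ wt c = wt c' := by
  obtain ⟨c, hc, rfl⟩ := Submodule.mem_map.1 hc'
  refine ⟨c, (Submodule.mem_inf.1 hc).1, ?_, (wt_comp_eq hf (Submodule.mem_inf.1 hc).2).symm⟩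
  rintro rfl
  exact hc'0 (map_zero _)

end Shortening

section MinimumDistance

variable {F : Type} [Field F] [DecidableEq F] {ι : Type} [Fintype ι]

lemma dmin_le_wt {C : Submodule F (ι → F)} {c : ι → F} (hc : c ∈ C) (hc0 : c ≠ 0) :
    dmin C ≤ wt c :=
  Nat.sInf_le ⟨c, hc, hc0, rfl⟩

lemma exists_wt_eq_dmin {C : Submodule F (ι → F)} (hC : C ≠ ⊥) :
    ∃ c ∈ C, c ≠ 0 ∧ wt c = dmin C := by
  obtain ⟨c, hc, hc0⟩ := Submodule.exists_mem_ne_zero_of_ne_bot hC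
  have hne : {w | ∃ c ∈ C, c ≠ 0 ∧ wt c = w}.Nonempty := ⟨wt c, c, hc, hc0, rfl⟩
  exact Nat.sInf_mem hne

lemma dmin_le_card (C : Submodule F (ι → F)) : dmin C ≤ Fintype.card ι := by
  rcases eq_or_ne C ⊥ with rfl | hC
  · simp [dmin, Submodule.mem_bot]
  · obtain ⟨c, -, -, hc⟩ := exists_wt_eq_dmin hC
    rw [← hc, wt_eq_card_supp]
    exact Finset.card_le_univ _

lemma dmin_le_dmax {n r t : ℕ} {C : Submodule F (Fin n → F)} (hav : HasAvailability C r t) :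
    dmin C ≤ dmax F n (finrank F C) r t :=
  le_csSup ⟨n, by rintro _ ⟨C', -, -, rfl⟩; simpa using dmin_le_card C'⟩ ⟨C, rfl, hav, rfl⟩

lemma dmin_le_dmin_of_le_shortening {κ : Type} [Fintype κ] {C : Submodule F (ι → F)}
    {f : κ → ι} (hf : Function.Injective f) {C' : Submodule F (κ → F)}
    (hC' : C' ≤ shortening C f) (hC'0 : C' ≠ ⊥) : dmin C ≤ dmin C' := by
  obtain ⟨c', hc', hc'0, hwt'⟩ := exists_wt_eq_dmin hC'0
  obtain ⟨c, hc, hc0, hwt⟩ := exists_wt_eq_of_mem_shortening (hC' hc') hc'0 hf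
  exact hwt' ▸ hwt ▸ dmin_le_wt hc hc0

end MinimumDistance

end LinearCode

open LinearCode in
theorem stmt16_general {F : Type} [Field F] [DecidableEq F]
    (n r t i : ℕ) (hr : 2 ≤ r) (ht : 2 ≤ t)
    (C : Submodule F (Fin n → F))
    (hav : HasAvailability C r t)
    (hik : i * (r - 1) + 1 < Module.finrank F C) :
    dmin C ≤ dmax F (n - (i * r + 1)) (Module.finrank F C - (i * (r - 1) + 1)) r t := by
  have hir : i * (r - 1) + i = i * r := by rw [← Nat.mul_add_one, Nat.sub_add_cancel (by omega)]
  obtain ⟨D, S, hcover⟩ := exists_isLocalCover hr ht hav i (by omega)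
  have hn : i * r + 1 ≤ n := by
    have hdual := finrank_add_finrank_dualCode C
    have hD := Submodule.finrank_mono hcover.le_dualCode
    rw [Fintype.card_fin] at hdual
    rw [hcover.finrank_eq] at hD
    omega
  obtain ⟨T, hST, hT⟩ := Finset.exists_superset_card_eq hcover.card_le (by simpa using hn)
  have hdim := finrank_add_finrank_le_finrank_inf_vanishingOn hcover.le_dualCode
    (hcover.le_vanishingOn.trans (vanishingOn_anti (by simpa using hST)))
  rw [hcover.finrank_eq, hT] at hdim
  let f := Tᶜ.orderEmbOfFin (k := n - (i * r + 1)) (by simp [Finset.card_compl, hT])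
  have hrange : (Set.range f)ᶜ = ↑T := by simp [f]
  obtain ⟨C', hC', hk'⟩ := exists_le_finrank_eq (W := shortening C f)
    (k := finrank F C - (i * (r - 1) + 1))
    (by rw [finrank_shortening, hrange]; omega)
  have hC'0 : C' ≠ ⊥ := by
    rintro rfl
    simp only [finrank_bot] at hk'
    omega
  calc dmin C ≤ dmin C' := dmin_le_dmin_of_le_shortening f.injective hC' hC'0
    _ ≤ _ := hk' ▸ dmin_le_dmax ((hav.shortening f.injective).mono hC')

/-- If `C` is an `[n,k]` code over `F_q` with locality `r ≥ 2` and availability `t ≥ 2`,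
then for every positive integer `i` with `i(r-1)+1 < k`,
`d_min(C) ≤ d_max(n - ir - 1, k - (i(r-1)+1), r, t)`. -/
theorem stmt16 {F : Type} [Field F] [Fintype F] [DecidableEq F]
    (n r t i : ℕ) (hr : 2 ≤ r) (ht : 2 ≤ t) (hi : 1 ≤ i)
    (C : Submodule F (Fin n → F))
    (hav : HasAvailability C r t)
    (hik : i * (r - 1) + 1 < Module.finrank F C) :
    dmin C ≤ dmax F (n - (i * r + 1)) (Module.finrank F C - (i * (r - 1) + 1)) r t :=
  stmt16_general n r t i hr ht C hav hik
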